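/- Let d ≥ 1 and suppose q = (q_1,…,q_{n−1}, q_n(q̄)) is a normalized central configuration in (ℝ^d)^n, where q̄ = (q_1,…,q_{n−1}). Then the rank of the Jacobian matrix DF^red(q̄) equals the rank of the Jacobian matrix DF(q) minus d. -/

import Mathlib

open scoped BigOperators

noncomputable section

/-- Points in `ℝ^d`, with the Euclidean norm. -/
abbrev Pt (d : ℕ) := EuclideanSpace ℝ (Fin d)

/-- `F_i(q) = −q_i + Σ_{j ≠ i} m_j (q_j − q_i)/‖q_j − q_i‖³`. -/
noncomputable def nbodyF {d n : ℕ} (m : Fin n → ℝ) (q : Fin n → Pt d) : Fin n → Pt d :=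
  fun i => -q i + ∑ j ∈ Finset.univ.erase i, (m j / ‖q j - q i‖ ^ 3) • (q j - q i)

/-- A configuration is collision-free if all bodies occupy distinct positions. -/
def CollisionFree {d n : ℕ} (q : Fin n → Pt d) : Prop :=
  ∀ i j, i ≠ j → q i ≠ q j

/-- A normalized central configuration: collision-free, center of mass at the origin,
and `F(q) = 0`. -/
def IsNCC {d n : ℕ} (m : Fin n → ℝ) (q : Fin n → Pt d) : Prop :=
  CollisionFree q ∧ (∑ i, m i • q i) = 0 ∧ nbodyF m q = 0

/-- Embedding of the reduced index set `{1,…,n−1}` into `{1,…,n}`. -/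
def emb {n : ℕ} (i : Fin (n - 1)) : Fin n := Fin.castLE (Nat.sub_le n 1) i

/-- Extend a reduced configuration `q̄ = (q_1,…,q_{n−1})` by the position of the last body,
`q_n(q̄) = −(1/m_n) Σ_{i<n} m_i q_i`, computed from the center of mass condition. -/
noncomputable def extendConfig {d n : ℕ} (m : Fin n → ℝ) (qbar : Fin (n - 1) → Pt d) :
    Fin n → Pt d :=
  fun i => if h : (i : ℕ) < n - 1 then qbar ⟨i, h⟩
    else (-(1 / m i)) • ∑ j : Fin (n - 1), m (emb j) • qbar j

/-- The center-of-mass reduced map `F^red_i(q̄) = F_i(q_1,…,q_{n−1},q_n(q̄))`, `i = 1,…,n−1`. -/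
noncomputable def Fred {d n : ℕ} (m : Fin n → ℝ) (qbar : Fin (n - 1) → Pt d) :
    Fin (n - 1) → Pt d :=
  fun i => nbodyF m (extendConfig m qbar) (emb i)

/-- The Jacobian matrix of `F`, rows and columns indexed by (body, coordinate). -/
noncomputable def jacF {d n : ℕ} (m : Fin n → ℝ) (q : Fin n → Pt d) :
    Matrix (Fin n × Fin d) (Fin n × Fin d) ℝ :=
  fun p p' =>
    fderiv ℝ (fun q' : Fin n → Pt d => nbodyF m q' p.1 p.2) q
      (Pi.single p'.1 (EuclideanSpace.single p'.2 (1 : ℝ)))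

/-- The Jacobian matrix of `F^red`, rows and columns indexed by (body, coordinate). -/
noncomputable def jacFred {d n : ℕ} (m : Fin n → ℝ) (qbar : Fin (n - 1) → Pt d) :
    Matrix (Fin (n - 1) × Fin d) (Fin (n - 1) × Fin d) ℝ :=
  fun p p' =>
    fderiv ℝ (fun q' : Fin (n - 1) → Pt d => Fred m q' p.1 p.2) qbar
      (Pi.single p'.1 (EuclideanSpace.single p'.2 (1 : ℝ)))

section AuxDefs

variable {d n : ℕ}

/-- The weighted-sum (total momentum / center of mass) map as a CLM. -/
noncomputable def Smap (m : Fin n → ℝ) : (Fin n → Pt d) →L[ℝ] Pt d :=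
  LinearMap.toContinuousLinearMap
    { toFun := fun v => ∑ i, m i • v i
      map_add' := by
        intro x y
        simp [Pi.add_apply, smul_add, Finset.sum_add_distrib]
      map_smul' := by
        intro c x
        simp [Finset.smul_sum, smul_comm c] }

/-- Constant configurations as a CLM. -/
noncomputable def Cmap (d n : ℕ) : Pt d →L[ℝ] (Fin n → Pt d) :=
  LinearMap.toContinuousLinearMap
    { toFun := fun c => fun _ => c
      map_add' := by intro x y; rfl
      map_smul' := by intro c x; rfl }

/-- Restriction to the first `n-1` bodies, as a CLM. -/
noncomputable def Pmap (d n : ℕ) : (Fin n → Pt d) →L[ℝ] (Fin (n - 1) → Pt d) :=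
  LinearMap.toContinuousLinearMap
    { toFun := fun v => fun j => v (emb j)
      map_add' := by intro x y; rfl
      map_smul' := by intro c x; rfl }

/-- The extension map as a CLM. -/
noncomputable def Emap (d : ℕ) (m : Fin n → ℝ) : (Fin (n - 1) → Pt d) →L[ℝ] (Fin n → Pt d) :=
  LinearMap.toContinuousLinearMap
    { toFun := extendConfig m
      map_add' := by
        intro x y
        funext i
        simp only [extendConfig, Pi.add_apply]
        split_ifs with h
        · rfl
        · rw [← smul_add, ← Finset.sum_add_distrib]
          congr 1
          exact Finset.sum_congr rfl fun j _ => smul_add _ _ _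
      map_smul' := by
        intro c x
        funext i
        simp only [extendConfig, Pi.smul_apply, RingHom.id_apply]
        split_ifs with h
        · rfl
        · rw [Finset.sum_congr rfl fun j _ => smul_comm (m (emb j)) c (x j),
            ← Finset.smul_sum, smul_comm] }

@[simp] lemma Smap_apply (m : Fin n → ℝ) (v : Fin n → Pt d) :
    Smap m v = ∑ i, m i • v i := rfl

@[simp] lemma Cmap_apply (c : Pt d) (i : Fin n) : Cmap d n c i = c := rfl

@[simp] lemma Pmap_apply (v : Fin n → Pt d) (j : Fin (n - 1)) :
    Pmap d n v j = v (emb j) := rfl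

@[simp] lemma Emap_coe (m : Fin n → ℝ) : ⇑(Emap d m) = extendConfig m :=
  LinearMap.coe_toContinuousLinearMap' _

end AuxDefs
section Analysis

variable {d n : ℕ}

lemma diff_kernel (c : ℝ) {x : Pt d} (hx : x ≠ 0) :
    DifferentiableAt ℝ (fun y : Pt d => (c / ‖y‖ ^ 3) • y) x := by
  have h1 : DifferentiableAt ℝ (fun y : Pt d => ‖y‖) x :=
    (contDiffAt_norm (𝕜 := ℝ) (n := 1) hx).differentiableAt one_ne_zero
  have hne : ‖x‖ ^ 3 ≠ 0 := pow_ne_zero _ (norm_ne_zero_iff.2 hx)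
  have h3 : DifferentiableAt ℝ (fun y : Pt d => ‖y‖ ^ 3) x := h1.pow 3
  have h2 : DifferentiableAt ℝ (fun y : Pt d => c / ‖y‖ ^ 3) x := by
    simp only [div_eq_mul_inv]
    exact (h3.inv hne).const_mul c
  exact h2.smul differentiableAt_fun_id

lemma diffAt_comp (m : Fin n → ℝ) {q : Fin n → Pt d} (hq : CollisionFree q) (i : Fin n) :
    DifferentiableAt ℝ (fun q' : Fin n → Pt d => nbodyF m q' i) q := by
  unfold nbodyF
  refine DifferentiableAt.add ?_ ?_
  · exact ((ContinuousLinearMap.proj i : (Fin n → Pt d) →L[ℝ] Pt d).differentiableAt).neg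
  · refine DifferentiableAt.fun_sum fun j hj => ?_
    have hji : j ≠ i := Finset.ne_of_mem_erase hj
    have hsub : DifferentiableAt ℝ (fun q' : Fin n → Pt d => q' j - q' i) q :=
      ((ContinuousLinearMap.proj j : (Fin n → Pt d) →L[ℝ] Pt d).differentiableAt).sub
        ((ContinuousLinearMap.proj i : (Fin n → Pt d) →L[ℝ] Pt d).differentiableAt)
    have hne : q j - q i ≠ 0 := sub_ne_zero.2 (hq j i hji)
    exact (by have := (diff_kernel (m j) hne).comp q hsub; exact this)

lemma diffAt_F (m : Fin n → ℝ) {q : Fin n → Pt d} (hq : CollisionFree q) :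
    DifferentiableAt ℝ (nbodyF m) q :=
  differentiableAt_pi.2 fun i => diffAt_comp m hq i

end Analysis
section Algebra

variable {d n : ℕ}

/-- Translation identity: `F(q + c) = F(q) - c` componentwise (holds as a formula for all q). -/
lemma nbodyF_shift (m : Fin n → ℝ) (q : Fin n → Pt d) (c : Pt d) :
    nbodyF m (fun i => q i + c) = fun i => nbodyF m q i - c := by
  funext i
  simp only [nbodyF]
  have hdiff : ∀ j : Fin n, (q j + c) - (q i + c) = q j - q i := by intro j; abel
  have : (∑ j ∈ Finset.univ.erase i,
      (m j / ‖(q j + c) - (q i + c)‖ ^ 3) • ((q j + c) - (q i + c))) =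
      ∑ j ∈ Finset.univ.erase i, (m j / ‖q j - q i‖ ^ 3) • (q j - q i) :=
    Finset.sum_congr rfl fun j _ => by rw [hdiff j]
  rw [this]
  abel

/-- The weighted sum of the forces: `Σ m_i F_i(q) = -Σ m_i q_i` (holds for all q). -/
lemma wsum_nbodyF (m : Fin n → ℝ) (q : Fin n → Pt d) :
    ∑ i, m i • nbodyF m q i = -∑ i, m i • q i := by
  classical
  set f : Fin n → Fin n → Pt d :=
    fun i j => m i • ((m j / ‖q j - q i‖ ^ 3) • (q j - q i)) with hf
  have hdiag : ∀ i, f i i = 0 := by intro i; simp [hf]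
  have hanti : ∀ i j, f i j = -f j i := by
    intro i j
    by_cases hij : i = j
    · subst hij; simp [hdiag]
    · simp only [hf, smul_smul]
      rw [norm_sub_rev (q j) (q i), show q j - q i = -(q i - q j) by abel]
      rw [smul_neg]
      ring_nf
  have hT : (∑ i, ∑ j, f i j) = 0 := by
    have h1 : (∑ i, ∑ j, f i j) = -∑ i, ∑ j, f i j := by
      calc (∑ i, ∑ j, f i j) = ∑ j, ∑ i, f i j := Finset.sum_comm
        _ = ∑ j, ∑ i, -f j i :=
            Finset.sum_congr rfl fun j _ => Finset.sum_congr rfl fun i _ => hanti i j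
        _ = -∑ j, ∑ i, f j i := by simp only [Finset.sum_neg_distrib]
    have h2 : (2 : ℝ) • (∑ i, ∑ j, f i j) = 0 := by
      rw [two_smul]; nth_rewrite 2 [h1]; abel
    rcases smul_eq_zero.mp h2 with h | h
    · norm_num at h
    · exact h
  have hsum : ∀ i, m i • nbodyF m q i = m i • (-q i) + ∑ j, f i j := by
    intro i
    simp only [nbodyF, smul_add]
    congr 1
    rw [Finset.smul_sum]
    exact Finset.sum_erase _ (hdiag i)
  calc (∑ i, m i • nbodyF m q i) = (∑ i, m i • (-q i)) + ∑ i, ∑ j, f i j := by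
        rw [← Finset.sum_add_distrib]; exact Finset.sum_congr rfl fun i _ => hsum i
    _ = -∑ i, m i • q i := by
        rw [hT, add_zero]
        simp only [smul_neg, Finset.sum_neg_distrib]

end Algebra
section DerivIdent

variable {d n : ℕ}

lemma Smap_fderiv (m : Fin n → ℝ) {q : Fin n → Pt d} (hq : CollisionFree q)
    (v : Fin n → Pt d) :
    Smap m (fderiv ℝ (nbodyF m) q v) = -(Smap m v) := by
  have hF := diffAt_F m hq
  have heq : (fun q' : Fin n → Pt d => Smap m (nbodyF m q')) =
      fun q' : Fin n → Pt d => -(Smap m q') := by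
    funext q'
    simp only [Smap_apply]
    rw [wsum_nbodyF]
  have h1 : fderiv ℝ (fun q' : Fin n → Pt d => Smap m (nbodyF m q')) q
      = (Smap m).comp (fderiv ℝ (nbodyF m) q) :=
    ((Smap m).hasFDerivAt.comp q hF.hasFDerivAt).fderiv
  have h2 : fderiv ℝ (fun q' : Fin n → Pt d => -(Smap m q')) q = -(Smap m) :=
    ((Smap m).hasFDerivAt (x := q)).neg.fderiv
  rw [heq, h2] at h1
  simpa using DFunLike.congr_fun h1.symm v

lemma fderiv_const_dir (m : Fin n → ℝ) {q : Fin n → Pt d} (hq : CollisionFree q) (c : Pt d) :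
    fderiv ℝ (nbodyF m) q (Cmap d n c) = -(Cmap d n c) := by
  have hF := (diffAt_F m hq).hasFDerivAt
  set w : Fin n → Pt d := Cmap d n c with hw
  have hγ : HasDerivAt (fun t : ℝ => q + t • w) w 0 := by
    have h0 : HasDerivAt (fun t : ℝ => t • w) ((1 : ℝ) • w) 0 := (hasDerivAt_id 0).smul_const w
    simpa using h0.const_add q
  have hF' : HasFDerivAt (nbodyF m) (fderiv ℝ (nbodyF m) q) (q + (0 : ℝ) • w) := by
    simpa using hF
  have hchain : HasDerivAt (fun t : ℝ => nbodyF m (q + t • w))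
      (fderiv ℝ (nbodyF m) q w) 0 := by have := hF'.comp_hasDerivAt (0 : ℝ) hγ; exact this
  have hG : HasDerivAt (fun t : ℝ => nbodyF m q - t • w) (-w) 0 := by
    have h0 : HasDerivAt (fun t : ℝ => t • w) w 0 := by
      simpa using (hasDerivAt_id (0 : ℝ)).smul_const w
    simpa using h0.const_sub (nbodyF m q)
  have hfun : (fun t : ℝ => nbodyF m (q + t • w)) = fun t : ℝ => nbodyF m q - t • w := by
    funext t
    have h1 : q + t • w = fun i => q i + t • c := rfl
    have h2 : nbodyF m (fun i => q i + t • c) = fun i => nbodyF m q i - t • c :=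
      nbodyF_shift m q (t • c)
    rw [h1, h2]
    rfl
  rw [hfun] at hchain
  exact hchain.unique hG

end DerivIdent
section Split

variable {d n : ℕ}

lemma sum_split {E : Type*} [AddCommMonoid E] (hn : 0 < n) (f : Fin n → E) :
    ∑ i, f i = (∑ j : Fin (n - 1), f (emb j)) + f ⟨n - 1, Nat.sub_lt hn one_pos⟩ := by
  have h : n - 1 + 1 = n := Nat.succ_pred_eq_of_pos hn
  have he : ∑ i : Fin (n - 1 + 1), f (finCongr h i) = ∑ i, f i :=
    Fintype.sum_equiv (finCongr h) _ _ fun i => rfl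
  rw [← he, Fin.sum_univ_castSucc]
  exact congrArg₂ (· + ·)
    (Finset.sum_congr rfl fun j _ => congrArg f (Fin.ext rfl)) (congrArg f (Fin.ext rfl))

lemma index_cases (hn : 0 < n) (i : Fin n) :
    (∃ j : Fin (n - 1), i = emb j) ∨ i = ⟨n - 1, Nat.sub_lt hn one_pos⟩ := by
  by_cases h : (i : ℕ) < n - 1
  · exact Or.inl ⟨⟨i, h⟩, by apply Fin.ext; rfl⟩
  · exact Or.inr (Fin.ext (by have := i.isLt; simp only []; omega))

lemma emb_mk {i : Fin n} (h : (i : ℕ) < n - 1) : emb ⟨(i : ℕ), h⟩ = i := Fin.ext rfl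

/-- `extendConfig` of the restriction of `v` recovers `v`, when `Σ mᵢ vᵢ = 0`. -/
lemma extend_restrict (hn : 0 < n) (m : Fin n → ℝ) (hm : ∀ i, 0 < m i)
    {v : Fin n → Pt d} (hv : ∑ i, m i • v i = 0) :
    extendConfig m (fun j => v (emb j)) = v := by
  set lst : Fin n := ⟨n - 1, Nat.sub_lt hn one_pos⟩ with hlst
  have hsum : (∑ j : Fin (n - 1), m (emb j) • v (emb j)) = -(m lst • v lst) := by
    have := sum_split hn (fun i => m i • v i)
    rw [hv] at this
    rw [eq_neg_iff_add_eq_zero]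
    exact this.symm
  funext i
  simp only [extendConfig]
  split_ifs with h
  · rw [emb_mk h]
  · have hi : i = lst := Fin.ext (by have h1 := i.isLt; have h2 : (lst : ℕ) = n - 1 := rfl; omega)
    subst hi
    rw [hsum, smul_neg, smul_smul]
    have hm0 : m lst ≠ 0 := (hm lst).ne'
    have hc : -(1 / m lst) * m lst = -1 := by field_simp
    rw [hc]
    simp

lemma Smap_extend (hn : 0 < n) (m : Fin n → ℝ) (hm : ∀ i, 0 < m i)
    (qb : Fin (n - 1) → Pt d) : Smap m (extendConfig m qb) = 0 := by
  set lst : Fin n := ⟨n - 1, Nat.sub_lt hn one_pos⟩ with hlst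
  have hlt : ¬ ((lst : ℕ) < n - 1) := by simp [hlst]
  have hval : extendConfig m qb lst = (-(1 / m lst)) • ∑ j : Fin (n - 1), m (emb j) • qb j := by
    simp only [extendConfig, hlt, dif_neg, not_false_iff]
  have hemb : ∀ j : Fin (n - 1), extendConfig m qb (emb j) = qb j := by
    intro j
    have hj : ((emb j : Fin n) : ℕ) < n - 1 := j.2
    simp only [extendConfig, hj, dif_pos]
    exact congrArg qb (Fin.ext rfl)
  rw [Smap_apply, sum_split hn (fun i => m i • extendConfig m qb i)]
  rw [hval]
  have : (∑ j : Fin (n - 1), m (emb j) • extendConfig m qb (emb j))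
      = ∑ j : Fin (n - 1), m (emb j) • qb j :=
    Finset.sum_congr rfl fun j _ => by rw [hemb j]
  rw [this, smul_smul]
  have hm0 : m lst ≠ 0 := (hm lst).ne'
  rw [mul_neg, one_div, mul_inv_cancel₀ hm0]
  simp

end Split
section Bases

variable {d n : ℕ}

noncomputable def bV (d n : ℕ) : Module.Basis (Fin n × Fin d) ℝ (Fin n → Pt d) :=
  (Pi.basis fun _ : Fin n => (EuclideanSpace.basisFun (Fin d) ℝ).toBasis).reindex
    (Equiv.sigmaEquivProd (Fin n) (Fin d))

lemma bV_apply (p : Fin n × Fin d) :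
    bV d n p = Pi.single p.1 (EuclideanSpace.single p.2 (1 : ℝ)) := by
  rw [bV, Module.Basis.reindex_apply]
  rw [show (Equiv.sigmaEquivProd (Fin n) (Fin d)).symm p = ⟨p.1, p.2⟩ from rfl]
  rw [Pi.basis_apply]
  rw [OrthonormalBasis.coe_toBasis, EuclideanSpace.basisFun_apply]

lemma bV_repr (x : Fin n → Pt d) (p : Fin n × Fin d) :
    (bV d n).repr x p = x p.1 p.2 := by
  rw [bV, Module.Basis.repr_reindex_apply]
  rw [show (Equiv.sigmaEquivProd (Fin n) (Fin d)).symm p = ⟨p.1, p.2⟩ from rfl]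
  rw [Pi.basis_repr, OrthonormalBasis.coe_toBasis_repr_apply, EuclideanSpace.basisFun_repr]

lemma jacF_toMatrix (m : Fin n → ℝ) {q : Fin n → Pt d} (hq : CollisionFree q) :
    jacF m q = LinearMap.toMatrix (bV d n) (bV d n)
      (fderiv ℝ (nbodyF m) q : (Fin n → Pt d) →ₗ[ℝ] (Fin n → Pt d)) := by
  ext p p'
  rw [LinearMap.toMatrix_apply, bV_repr, bV_apply]
  have hF := diffAt_F m hq
  set ev : (Fin n → Pt d) →L[ℝ] ℝ :=
    (EuclideanSpace.proj p.2 : Pt d →L[ℝ] ℝ).comp (ContinuousLinearMap.proj p.1) with hev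
  have h2 : fderiv ℝ (fun q' : Fin n → Pt d => nbodyF m q' p.1 p.2) q
      = ev.comp (fderiv ℝ (nbodyF m) q) := by
    refine HasFDerivAt.fderiv ?_
    exact ev.hasFDerivAt.comp q hF.hasFDerivAt
  show (fderiv ℝ (fun q' : Fin n → Pt d => nbodyF m q' p.1 p.2) q)
      (Pi.single p'.1 (EuclideanSpace.single p'.2 (1 : ℝ))) = _
  rw [h2]
  rfl

end Bases
section Reduced

variable {d n : ℕ}

lemma Fred_comp (m : Fin n → ℝ) :
    Fred (d := d) m = fun qb => Pmap d n (nbodyF m (Emap d m qb)) := by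
  funext qb i
  simp only [Fred, Pmap_apply, Emap_coe]

lemma hasFDerivAt_Fred (m : Fin n → ℝ) (qbar : Fin (n - 1) → Pt d)
    (hq : CollisionFree (extendConfig m qbar)) :
    HasFDerivAt (Fred (d := d) m)
      ((Pmap d n).comp ((fderiv ℝ (nbodyF m) (extendConfig m qbar)).comp (Emap d m)))
      qbar := by
  rw [Fred_comp]
  have hE : HasFDerivAt (Emap d m) (Emap d m) qbar := (Emap d m).hasFDerivAt
  have hF : HasFDerivAt (nbodyF m) (fderiv ℝ (nbodyF m) (extendConfig m qbar))
      (Emap d m qbar) := by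
    rw [show Emap d m qbar = extendConfig m qbar from congrFun (Emap_coe m) qbar]
    exact (diffAt_F m hq).hasFDerivAt
  exact (Pmap d n).hasFDerivAt.comp qbar (hF.comp qbar hE)

lemma jacFred_toMatrix (m : Fin n → ℝ) (qbar : Fin (n - 1) → Pt d)
    (hq : CollisionFree (extendConfig m qbar)) :
    jacFred m qbar = LinearMap.toMatrix (bV d (n - 1)) (bV d (n - 1))
      (((Pmap d n).comp ((fderiv ℝ (nbodyF m) (extendConfig m qbar)).comp (Emap d m)) :
        (Fin (n - 1) → Pt d) →L[ℝ] (Fin (n - 1) → Pt d)) :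
        (Fin (n - 1) → Pt d) →ₗ[ℝ] (Fin (n - 1) → Pt d)) := by
  ext p p'
  rw [LinearMap.toMatrix_apply, bV_repr, bV_apply]
  set D := (Pmap d n).comp ((fderiv ℝ (nbodyF m) (extendConfig m qbar)).comp (Emap d m))
    with hD
  have hFred : HasFDerivAt (Fred (d := d) m) D qbar := hasFDerivAt_Fred m qbar hq
  set ev : (Fin (n - 1) → Pt d) →L[ℝ] ℝ :=
    (EuclideanSpace.proj p.2 : Pt d →L[ℝ] ℝ).comp (ContinuousLinearMap.proj p.1) with hev
  have h2 : fderiv ℝ (fun qb : Fin (n - 1) → Pt d => Fred m qb p.1 p.2) qbar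
      = ev.comp D := by
    refine HasFDerivAt.fderiv ?_
    exact ev.hasFDerivAt.comp qbar hFred
  show (fderiv ℝ (fun qb : Fin (n - 1) → Pt d => Fred m qb p.1 p.2) qbar)
      (Pi.single p'.1 (EuclideanSpace.single p'.2 (1 : ℝ))) = _
  rw [h2]
  rfl

end Reduced
/-- for a normalized central configuration `q = (q̄, q_n(q̄))`,
`rank(DF^red(q̄)) = rank(DF(q)) − d`. -/
theorem stmt0 {d n : ℕ} (hd : 1 ≤ d) (hn : 3 ≤ n) (m : Fin n → ℝ) (hm : ∀ i, 0 < m i)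
    (qbar : Fin (n - 1) → Pt d) (hcc : IsNCC m (extendConfig m qbar)) :
    (jacFred m qbar).rank + d = (jacF m (extendConfig m qbar)).rank := by
  classical
  obtain ⟨hcf, hcm, hF0⟩ := hcc
  have hn0 : 0 < n := by omega
  set q : Fin n → Pt d := extendConfig m qbar with hqdef
  set L : (Fin n → Pt d) →L[ℝ] (Fin n → Pt d) := fderiv ℝ (nbodyF m) q with hL
  set D : (Fin (n - 1) → Pt d) →L[ℝ] (Fin (n - 1) → Pt d) :=
    (Pmap d n).comp (L.comp (Emap d m)) with hD
  set Llin : (Fin n → Pt d) →ₗ[ℝ] (Fin n → Pt d) := ↑L with hLlin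
  set Dlin : (Fin (n - 1) → Pt d) →ₗ[ℝ] (Fin (n - 1) → Pt d) := ↑D with hDlin
  set Slin : (Fin n → Pt d) →ₗ[ℝ] Pt d := ↑(Smap m (d := d)) with hSlin
  set Clin : Pt d →ₗ[ℝ] (Fin n → Pt d) := ↑(Cmap d n) with hClin
  set Elin : (Fin (n - 1) → Pt d) →ₗ[ℝ] (Fin n → Pt d) := ↑(Emap d m) with hElin
  set Plin : (Fin n → Pt d) →ₗ[ℝ] (Fin (n - 1) → Pt d) := ↑(Pmap d n) with hPlin
  set W : Submodule ℝ (Fin n → Pt d) := LinearMap.ker Slin with hW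
  set C : Submodule ℝ (Fin n → Pt d) := LinearMap.range Clin with hC
  -- matrix ranks as finranks of ranges
  have hr1 : (jacF m q).rank = Module.finrank ℝ (LinearMap.range Llin) := by
    rw [jacF_toMatrix m hcf,
      Matrix.rank_eq_finrank_range_toLin _ (bV d n) (bV d n), Matrix.toLin_toMatrix]
  have hr2 : (jacFred m qbar).rank = Module.finrank ℝ (LinearMap.range Dlin) := by
    rw [jacFred_toMatrix m qbar hcf,
      Matrix.rank_eq_finrank_range_toLin _ (bV d (n - 1)) (bV d (n - 1)),
      Matrix.toLin_toMatrix]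
  -- basic identities
  have hSL : ∀ v, Slin (Llin v) = -(Slin v) := fun v => Smap_fderiv m hcf v
  have hLC : ∀ c, Llin (Clin c) = -(Clin c) := fun c => fderiv_const_dir m hcf c
  have hmapLW : Submodule.map Llin W ≤ W := by
    rintro x hx
    rw [Submodule.mem_map] at hx
    obtain ⟨v, hv, rfl⟩ := hx
    rw [hW, LinearMap.mem_ker] at hv ⊢
    rw [hSL, hv, neg_zero]
  have hCinj : Function.Injective Clin := by
    intro a b hab
    exact congrFun hab ⟨0, hn0⟩
  have hMpos : 0 < ∑ i, m i := Finset.sum_pos (fun i _ => hm i) ⟨⟨0, hn0⟩, Finset.mem_univ _⟩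
  have hSC : ∀ c : Pt d, Slin (Clin c) = (∑ i, m i) • c := by
    intro c
    show Smap m (Cmap d n c) = _
    rw [Smap_apply]
    simp only [Cmap_apply]
    exact (Finset.sum_smul).symm
  have hCW_bot : C ⊓ W = ⊥ := by
    rw [Submodule.eq_bot_iff]
    intro x hx
    rw [Submodule.mem_inf] at hx
    obtain ⟨hxC, hxW⟩ := hx
    obtain ⟨c, rfl⟩ := LinearMap.mem_range.mp hxC
    have h0 : Slin (Clin c) = 0 := hxW
    rw [hSC] at h0
    rcases smul_eq_zero.mp h0 with h | h
    · exact absurd h hMpos.ne'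
    · rw [h, map_zero]
  have hsup : C ⊔ W = ⊤ := by
    rw [Submodule.eq_top_iff']
    intro v
    set c : Pt d := (∑ i, m i)⁻¹ • Slin v with hc
    have h1 : Clin c ∈ C := ⟨c, rfl⟩
    have h2 : v - Clin c ∈ W := by
      rw [hW, LinearMap.mem_ker, map_sub, hSC, hc, smul_smul,
        mul_inv_cancel₀ hMpos.ne', one_smul, sub_self]
    have := Submodule.add_mem_sup h1 h2
    rwa [add_sub_cancel] at this
  have hmapC : Submodule.map Llin C = C := by
    apply le_antisymm
    · rintro x hx
      rw [Submodule.mem_map] at hx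
      obtain ⟨y, ⟨c, rfl⟩, rfl⟩ := hx
      rw [hLC]
      exact ⟨-c, (map_neg Clin c).symm⟩
    · rintro x ⟨c, rfl⟩
      refine Submodule.mem_map.mpr ⟨Clin (-c), ⟨-c, rfl⟩, ?_⟩
      rw [hLC, map_neg, neg_neg]
  have hrange : LinearMap.range Llin = C ⊔ Submodule.map Llin W := by
    rw [LinearMap.range_eq_map, ← hsup, Submodule.map_sup, hmapC]
  have hinf : C ⊓ Submodule.map Llin W = ⊥ := by
    rw [eq_bot_iff, ← hCW_bot]
    exact inf_le_inf_left C hmapLW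
  have hfinC : Module.finrank ℝ C = d := by
    rw [hC, LinearMap.finrank_range_of_inj hCinj, finrank_euclideanSpace_fin]
  have hfin : Module.finrank ℝ (LinearMap.range Llin)
      = d + Module.finrank ℝ (Submodule.map Llin W) := by
    have h := Submodule.finrank_sup_add_finrank_inf_eq C (Submodule.map Llin W)
    rw [hinf, finrank_bot, add_zero] at h
    rw [hrange, h, hfinC]
  -- reduced side
  have hrangeE : LinearMap.range Elin = W := by
    apply le_antisymm
    · rintro x ⟨qb, rfl⟩
      rw [hW, LinearMap.mem_ker]
      show Smap m (Emap d m qb) = 0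
      rw [show Emap d m qb = extendConfig m qb from congrFun (Emap_coe m) qb]
      exact Smap_extend hn0 m hm qb
    · intro v hv
      rw [hW, LinearMap.mem_ker] at hv
      refine ⟨fun j => v (emb j), ?_⟩
      show Emap d m (fun j => v (emb j)) = v
      rw [show Emap d m (fun j => v (emb j)) = extendConfig m (fun j => v (emb j)) from
        congrFun (Emap_coe m) _]
      exact extend_restrict hn0 m hm hv
  have hrangeD : LinearMap.range Dlin = Submodule.map Plin (Submodule.map Llin W) := by
    have hcoe : Dlin = Plin ∘ₗ (Llin ∘ₗ Elin) := by
      rw [hDlin, hD]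
      rfl
    rw [hcoe, LinearMap.range_comp, LinearMap.range_comp, hrangeE]
  have hkerP : ∀ v ∈ W, Plin v = 0 → v = 0 := by
    intro v hvW hvP
    have hv0 : ∀ j : Fin (n - 1), v (emb j) = 0 := fun j => congrFun hvP j
    rw [hW, LinearMap.mem_ker] at hvW
    have hs := sum_split hn0 (fun i => m i • v i)
    rw [show (∑ i, m i • v i) = Smap m v from rfl, show Smap m v = Slin v from rfl, hvW] at hs
    set lst : Fin n := ⟨n - 1, Nat.sub_lt hn0 one_pos⟩ with hlst
    have hz : (∑ j : Fin (n - 1), m (emb j) • v (emb j)) = 0 := by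
      refine Finset.sum_eq_zero fun j _ => ?_
      rw [hv0 j, smul_zero]
    rw [hz, zero_add] at hs
    have hvlst : v lst = 0 := by
      rcases smul_eq_zero.mp hs.symm with h | h
      · exact absurd h (hm lst).ne'
      · exact h
    funext i
    rcases index_cases hn0 i with ⟨j, rfl⟩ | rfl
    · exact hv0 j
    · exact hvlst
  have hfinP : Module.finrank ℝ (Submodule.map Plin (Submodule.map Llin W))
      = Module.finrank ℝ (Submodule.map Llin W) := by
    set M : Submodule ℝ (Fin n → Pt d) := Submodule.map Llin W with hM
    set g : M →ₗ[ℝ] (Fin (n - 1) → Pt d) := Plin ∘ₗ M.subtype with hg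
    have hginj : Function.Injective g := by
      intro x y hxy
      have h0 : Plin ((x : Fin n → Pt d) - y) = 0 := by
        rw [map_sub]
        rw [hg] at hxy
        simp only [LinearMap.coe_comp, Function.comp_apply, Submodule.coe_subtype] at hxy
        rw [hxy, sub_self]
      have hmem : ((x : Fin n → Pt d) - y) ∈ W := hmapLW (sub_mem x.2 y.2)
      have := hkerP _ hmem h0
      exact Subtype.ext (sub_eq_zero.mp this)
    have hrg : LinearMap.range g = Submodule.map Plin M := by
      rw [hg, LinearMap.range_comp, Submodule.range_subtype]
    rw [← hrg, LinearMap.finrank_range_of_inj hginj]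
  rw [hr1, hr2, hrangeD, hfinP, hfin]
  omega
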